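/- arXiv:1801.08215 — 5 statements merged into one kernel-verified Lean document; each statement's English description precedes it below -/
import Mathlib

section
/- The normalized Black-Scholes function C satisfies the forward Black-Scholes partial differential equation: for every x ∈ ℝ and every w > 0, ∂C/∂w (x,w) − (1/2) ∂²C/∂x² (x,w) + (1/2) ∂C/∂x (x,w) = 0. -/
open MeasureTheory Real

/-- The standard normal cumulative distribution function. -/
noncomputable def stdNormalCDF (z : ℝ) : ℝ :=
  ∫ u in Set.Iic z, (Real.sqrt (2 * Real.pi))⁻¹ * Real.exp (-u ^ 2 / 2)

/-- The normalized Black-Scholes function `C(x,w) = e^x N(d₁) - N(d₂)`. -/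
noncomputable def bsC (x w : ℝ) : ℝ :=
  Real.exp x * stdNormalCDF (x / Real.sqrt w + Real.sqrt w / 2)
    - stdNormalCDF (x / Real.sqrt w + Real.sqrt w / 2 - Real.sqrt w)

/-!
Write `s = √w`, so that `C(x, w) = P(x, √w)` with `P(x, s) = eˣ N(d₁) - N(d₁ - s)` and
`d₁ = x/s + s/2`. Completing the square gives `eˣ φ(d₁) = φ(d₁ - s)` for the normal density `φ`.
With it the `N'`-terms cancel in `∂ₓP = eˣ N(d₁)`, and `∂ₛP = φ(d₁ - s)`,
`∂ₓₓP = ∂ₓP + φ(d₁ - s)/s`. Since `∂_w = (2s)⁻¹ ∂ₛ`, the equation follows.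
-/

open Set

theorem hasDerivAt_integral_Iic {E : Type*} [NormedAddCommGroup E] [NormedSpace ℝ E]
    [CompleteSpace E] {f : ℝ → E} (hf : Integrable f) (hc : Continuous f) (z : ℝ) :
    HasDerivAt (fun y => ∫ u in Iic y, f u) (f z) z := by
  have hsplit : (fun y => ∫ u in Iic y, f u) = fun y => (∫ u in Iic 0, f u) + ∫ u in 0..y, f u := by
    funext y
    rw [← intervalIntegral.integral_Iic_sub_Iic hf.integrableOn hf.integrableOn,
      add_sub_cancel]
  rw [hsplit]
  exact (intervalIntegral.integral_hasDerivAt_right hf.intervalIntegrable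
    (hc.stronglyMeasurableAtFilter _ _) hc.continuousAt).const_add _

noncomputable def stdNormalPDF (u : ℝ) : ℝ := (√(2 * π))⁻¹ * exp (-u ^ 2 / 2)

theorem integrable_stdNormalPDF : Integrable stdNormalPDF := by
  refine ((integrable_exp_neg_mul_sq (b := 1 / 2) (by norm_num)).const_mul (√(2 * π))⁻¹).congr ?_
  filter_upwards with u
  simp only [stdNormalPDF]
  ring_nf

theorem hasDerivAt_stdNormalCDF (z : ℝ) : HasDerivAt stdNormalCDF (stdNormalPDF z) z :=
  hasDerivAt_integral_Iic integrable_stdNormalPDF (by unfold stdNormalPDF; fun_prop) z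

theorem exp_mul_stdNormalPDF {s : ℝ} (hs : s ≠ 0) (x : ℝ) :
    exp x * stdNormalPDF (x / s + s / 2) = stdNormalPDF (x / s + s / 2 - s) := by
  simp only [stdNormalPDF]
  rw [mul_left_comm, ← exp_add]
  congr 2
  field_simp
  ring

noncomputable def bsPrice (x s : ℝ) : ℝ :=
  exp x * stdNormalCDF (x / s + s / 2) - stdNormalCDF (x / s + s / 2 - s)

theorem hasDerivAt_div_add_half (s x : ℝ) :
    HasDerivAt (fun x' => x' / s + s / 2) (1 / s) x := by
  simpa using ((hasDerivAt_id x).div_const s).add_const (s / 2)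

section

variable {s : ℝ}

theorem hasDerivAt_bsPrice_fst (hs : s ≠ 0) (x : ℝ) :
    HasDerivAt (fun x' => bsPrice x' s) (exp x * stdNormalCDF (x / s + s / 2)) x := by
  have hd₁ := hasDerivAt_div_add_half s x
  have h := ((hasDerivAt_exp x).mul ((hasDerivAt_stdNormalCDF _).comp x hd₁)).sub
    ((hasDerivAt_stdNormalCDF _).comp x (hd₁.sub_const s))
  refine h.congr_deriv ?_
  rw [← exp_mul_stdNormalPDF hs x]
  simp only [Function.comp_apply]
  ring

theorem hasDerivAt_exp_mul_stdNormalCDF (hs : s ≠ 0) (x : ℝ) :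
    HasDerivAt (fun x' => exp x' * stdNormalCDF (x' / s + s / 2))
      (exp x * stdNormalCDF (x / s + s / 2) + stdNormalPDF (x / s + s / 2 - s) / s) x := by
  refine ((hasDerivAt_exp x).mul
    ((hasDerivAt_stdNormalCDF _).comp x (hasDerivAt_div_add_half s x))).congr_deriv ?_
  rw [← exp_mul_stdNormalPDF hs x]
  simp only [Function.comp_apply]
  ring

theorem hasDerivAt_bsPrice_snd (hs : s ≠ 0) (x : ℝ) :
    HasDerivAt (fun s' => bsPrice x s') (stdNormalPDF (x / s + s / 2 - s)) s := by
  have hd₁ : HasDerivAt (fun s' => x / s' + s' / 2) ((0 * s - x * 1) / s ^ 2 + 1 / 2) s :=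
    ((hasDerivAt_const s x).fun_div (hasDerivAt_id' s) hs).add ((hasDerivAt_id' s).div_const 2)
  have h := ((hasDerivAt_stdNormalCDF _).comp s hd₁).const_mul (exp x) |>.sub
    ((hasDerivAt_stdNormalCDF _).comp s (hd₁.sub (hasDerivAt_id s)))
  refine h.congr_deriv ?_
  simp only [Pi.sub_apply, id]
  rw [← exp_mul_stdNormalPDF hs x]
  ring

end

/-- The normalized Black-Scholes function satisfies the forward Black-Scholes PDE
`C_w - (1/2) C_xx + (1/2) C_x = 0` for all `x ∈ ℝ` and `w > 0`. -/
theorem bsC_satisfies_forward_BS_PDE (x w : ℝ) (hw : 0 < w) :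
    deriv (fun w' => bsC x w') w
      - (1 / 2) * deriv (fun x' => deriv (fun x'' => bsC x'' w) x') x
      + (1 / 2) * deriv (fun x' => bsC x' w) x = 0 := by
  have hs : √w ≠ 0 := (sqrt_pos.mpr hw).ne'
  have hC_x : deriv (fun x' => bsC x' w) = fun x' => exp x' * stdNormalCDF (x' / √w + √w / 2) :=
    funext fun x' => (hasDerivAt_bsPrice_fst hs x').deriv
  have hC_w : HasDerivAt (fun w' => bsC x w')
      (stdNormalPDF (x / √w + √w / 2 - √w) * (1 / (2 * √w))) w :=
    (hasDerivAt_bsPrice_snd hs x).comp w (hasDerivAt_sqrt hw.ne')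
  rw [hC_w.deriv, hC_x, (hasDerivAt_exp_mul_stdNormalCDF hs x).deriv]
  ring
end

section
/- For every x ∈ ℝ, the normalized Black-Scholes function satisfies the initial condition lim_{w → 0+} C(x,w) = (e^x − 1)^+ = max(e^x − 1, 0). -/
open MeasureTheory Real

namespace BSAux

noncomputable def g (u : ℝ) : ℝ := (Real.sqrt (2 * Real.pi))⁻¹ * Real.exp (-u ^ 2 / 2)

lemma integrable_g : Integrable g := by
  have h : Integrable fun u : ℝ => Real.exp (-(1/2) * u ^ 2) :=
    integrable_exp_neg_mul_sq (by norm_num)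
  have := h.const_mul (Real.sqrt (2 * Real.pi))⁻¹
  refine this.congr ?_
  filter_upwards with u
  simp only [g]
  ring_nf

lemma integral_g : ∫ u, g u = 1 := by
  have h : ∫ u : ℝ, Real.exp (-(1/2) * u ^ 2) = Real.sqrt (Real.pi / (1/2)) :=
    integral_gaussian (1/2)
  have h2 : ∀ u : ℝ, g u = (Real.sqrt (2 * Real.pi))⁻¹ * Real.exp (-(1/2) * u ^ 2) := by
    intro u; simp only [g]; ring_nf
  simp_rw [h2]
  rw [integral_const_mul, h]
  have : Real.pi / (1/2) = 2 * Real.pi := by ring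
  rw [this]
  rw [inv_mul_cancel₀]
  positivity

lemma cdf_eq (z : ℝ) : stdNormalCDF z = ∫ u in Set.Iic z, g u := rfl

lemma cdf_tendsto_atTop : Filter.Tendsto stdNormalCDF Filter.atTop (nhds 1) := by
  have := (MeasureTheory.aecover_Iic (μ := volume) (l := Filter.atTop)
    (b := fun z : ℝ => z) Filter.tendsto_id).integral_tendsto_of_countably_generated
    integrable_g
  rw [integral_g] at this
  exact this

lemma cdf_symm (z : ℝ) : stdNormalCDF (-z) = 1 - stdNormalCDF z := by
  have h1 : stdNormalCDF (-z) = ∫ u in Set.Ioi z, g u := by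
    rw [cdf_eq]
    have h := integral_comp_neg_Iic (-z) g
    rw [neg_neg] at h
    rw [← h]
    congr 1
    ext u
    simp [g, neg_pow]
  have h2 := intervalIntegral.integral_Iic_add_Ioi (μ := volume) (b := z)
    integrable_g.integrableOn integrable_g.integrableOn
  rw [integral_g] at h2
  rw [h1, cdf_eq]
  linarith

lemma cdf_tendsto_atBot : Filter.Tendsto stdNormalCDF Filter.atBot (nhds 0) := by
  have h1 : Filter.Tendsto (fun z : ℝ => stdNormalCDF (-z)) Filter.atBot (nhds 1) :=
    cdf_tendsto_atTop.comp Filter.tendsto_neg_atBot_atTop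
  have h2 := (tendsto_const_nhds (x := (1:ℝ)) (f := Filter.atBot)).sub h1
  rw [sub_self] at h2
  refine h2.congr fun z => ?_
  have := cdf_symm z
  linarith

lemma cdf_continuous : Continuous stdNormalCDF := by
  have hc : Continuous fun z : ℝ => stdNormalCDF 0 + ∫ u in (0:ℝ)..z, g u :=
    continuous_const.add (integrable_g.continuous_primitive 0)
  refine hc.congr fun z => ?_
  have h := intervalIntegral.integral_Iic_sub_Iic (μ := volume) (a := (0:ℝ)) (b := z)
    integrable_g.integrableOn integrable_g.integrableOn
  simp only [cdf_eq]
  linarith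

lemma sqrt_tendsto : Filter.Tendsto Real.sqrt (nhdsWithin 0 (Set.Ioi 0))
    (nhdsWithin 0 (Set.Ioi 0)) := by
  apply tendsto_nhdsWithin_of_tendsto_nhds_of_eventually_within
  · have : Filter.Tendsto Real.sqrt (nhds 0) (nhds (Real.sqrt 0)) :=
      Real.continuous_sqrt.continuousAt
    simpa using this.mono_left nhdsWithin_le_nhds
  · filter_upwards [self_mem_nhdsWithin] with w hw
    exact Real.sqrt_pos.mpr hw

end BSAux

/-- Initial condition: `lim_{w → 0+} C(x,w) = (e^x - 1)^+`. -/
theorem bsC_initial_condition (x : ℝ) :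
    Filter.Tendsto (fun w => bsC x w) (nhdsWithin 0 (Set.Ioi 0))
      (nhds (max (Real.exp x - 1) 0)) := by
  open BSAux in
  have hsq : Filter.Tendsto Real.sqrt (nhdsWithin 0 (Set.Ioi 0))
      (nhdsWithin 0 (Set.Ioi 0)) := BSAux.sqrt_tendsto
  have hsq0 : Filter.Tendsto (fun w => Real.sqrt w) (nhdsWithin 0 (Set.Ioi 0)) (nhds 0) :=
    hsq.mono_right nhdsWithin_le_nhds
  rcases lt_trichotomy x 0 with hx | hx | hx
  · -- x < 0 : both d₁, d₂ → -∞, limit is 0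
    have hmax : max (Real.exp x - 1) 0 = 0 := by
      rw [max_eq_right]
      have := Real.exp_lt_one_iff.mpr hx
      linarith
    rw [hmax]
    have hdiv : Filter.Tendsto (fun w => x / Real.sqrt w) (nhdsWithin 0 (Set.Ioi 0))
        Filter.atBot := by
      have hinv : Filter.Tendsto (fun t : ℝ => t⁻¹) (nhdsWithin 0 (Set.Ioi 0))
          Filter.atTop := tendsto_inv_nhdsGT_zero
      have := (Filter.tendsto_const_mul_atBot_of_neg hx).mpr (hinv.comp hsq)
      simpa [div_eq_mul_inv, Function.comp] using this
    have hd1 : Filter.Tendsto (fun w => x / Real.sqrt w + Real.sqrt w / 2)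
        (nhdsWithin 0 (Set.Ioi 0)) Filter.atBot :=
      hdiv.atBot_add (hsq0.div_const 2)
    have hd2 : Filter.Tendsto (fun w => x / Real.sqrt w + Real.sqrt w / 2 - Real.sqrt w)
        (nhdsWithin 0 (Set.Ioi 0)) Filter.atBot := by
      have := hd1.atBot_add hsq0.neg
      simpa [sub_eq_add_neg] using this
    have h1 := BSAux.cdf_tendsto_atBot.comp hd1
    have h2 := BSAux.cdf_tendsto_atBot.comp hd2
    have : Filter.Tendsto (fun w => bsC x w) (nhdsWithin 0 (Set.Ioi 0))
        (nhds (Real.exp x * 0 - 0)) := by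
      exact ((tendsto_const_nhds.mul h1).sub h2)
    simpa using this
  · -- x = 0
    subst hx
    have hmax : max (Real.exp 0 - 1) 0 = 0 := by simp
    rw [hmax]
    have hd1 : Filter.Tendsto (fun w => (0:ℝ) / Real.sqrt w + Real.sqrt w / 2)
        (nhdsWithin 0 (Set.Ioi 0)) (nhds 0) := by
      simpa using hsq0.div_const 2
    have hd2 : Filter.Tendsto (fun w => (0:ℝ) / Real.sqrt w + Real.sqrt w / 2 - Real.sqrt w)
        (nhdsWithin 0 (Set.Ioi 0)) (nhds 0) := by
      simpa using (hsq0.div_const 2).sub hsq0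
    have h1 := (BSAux.cdf_continuous.tendsto 0).comp hd1
    have h2 := (BSAux.cdf_continuous.tendsto 0).comp hd2
    have : Filter.Tendsto (fun w => bsC 0 w) (nhdsWithin 0 (Set.Ioi 0))
        (nhds (Real.exp 0 * stdNormalCDF 0 - stdNormalCDF 0)) :=
      (tendsto_const_nhds.mul h1).sub h2
    simpa using this
  · -- x > 0 : both d₁, d₂ → +∞, limit is e^x - 1
    have hmax : max (Real.exp x - 1) 0 = Real.exp x - 1 := by
      rw [max_eq_left]
      have := Real.one_lt_exp_iff.mpr hx
      linarith
    rw [hmax]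
    have hdiv : Filter.Tendsto (fun w => x / Real.sqrt w) (nhdsWithin 0 (Set.Ioi 0))
        Filter.atTop := by
      have hinv : Filter.Tendsto (fun t : ℝ => t⁻¹) (nhdsWithin 0 (Set.Ioi 0))
          Filter.atTop := tendsto_inv_nhdsGT_zero
      have := (hinv.comp hsq).const_mul_atTop hx
      simpa [div_eq_mul_inv, Function.comp] using this
    have hd1 : Filter.Tendsto (fun w => x / Real.sqrt w + Real.sqrt w / 2)
        (nhdsWithin 0 (Set.Ioi 0)) Filter.atTop :=
      hdiv.atTop_add (hsq0.div_const 2)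
    have hd2 : Filter.Tendsto (fun w => x / Real.sqrt w + Real.sqrt w / 2 - Real.sqrt w)
        (nhdsWithin 0 (Set.Ioi 0)) Filter.atTop := by
      have := hd1.atTop_add hsq0.neg
      simpa [sub_eq_add_neg] using this
    have h1 := BSAux.cdf_tendsto_atTop.comp hd1
    have h2 := BSAux.cdf_tendsto_atTop.comp hd2
    have : Filter.Tendsto (fun w => bsC x w) (nhdsWithin 0 (Set.Ioi 0))
        (nhds (Real.exp x * 1 - 1)) :=
      (tendsto_const_nhds.mul h1).sub h2
    simpa using this
end

section
/- Let ξ be a normal random variable with mean μ and variance σ² > 0, and let N denote the standard normal cumulative distribution function. Then E[N(ξ)] = N( μ / √(1 + σ²) ). -/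
open MeasureTheory Real ProbabilityTheory
open scoped ENNReal NNReal

lemma stdNormalCDF_eq (z : ℝ) :
    stdNormalCDF z = ∫ u in Set.Iic z, gaussianPDFReal 0 1 u := by
  unfold stdNormalCDF gaussianPDFReal
  norm_num

lemma gaussianReal_Iic_toReal (m : ℝ) {v : NNReal} (hv : v ≠ 0) (z : ℝ) :
    ((gaussianReal m v) (Set.Iic z)).toReal = ∫ u in Set.Iic z, gaussianPDFReal m v u := by
  rw [gaussianReal_apply_eq_integral m hv, ENNReal.toReal_ofReal]
  exact integral_nonneg fun u => gaussianPDFReal_nonneg m v u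

lemma stdNormalCDF_shift (x : ℝ) :
    stdNormalCDF x = ∫ t in Set.Iic (0:ℝ), gaussianPDFReal 0 1 (t + x) := by
  rw [stdNormalCDF_eq]
  rw [← integral_indicator measurableSet_Iic, ← integral_indicator measurableSet_Iic]
  rw [← integral_add_right_eq_self (fun u => (Set.Iic x).indicator (gaussianPDFReal 0 1) u) x]
  congr 1
  ext t
  have : t + x ≤ x ↔ t ≤ 0 := add_le_iff_nonpos_left
  by_cases ht : t ≤ 0 <;> simp [Set.indicator_apply, Set.mem_Iic, this, ht]

lemma key_identity (μ σ t x : ℝ) (hσ : 0 < σ) :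
    gaussianPDFReal 0 1 (t + x) * gaussianPDFReal μ (σ^2).toNNReal x
      = gaussianPDFReal (-μ) (1 + σ^2).toNNReal t
        * gaussianPDFReal ((μ - σ^2*t)/(1+σ^2)) ((σ^2/(1+σ^2)).toNNReal) x := by
  have h1 : (0:ℝ) ≤ σ^2 := sq_nonneg σ
  have hσ' : σ ^ 2 ≠ 0 := by positivity
  have hs : (0:ℝ) < 1 + σ^2 := by positivity
  unfold gaussianPDFReal
  rw [Real.coe_toNNReal _ h1, Real.coe_toNNReal _ hs.le, Real.coe_toNNReal _ (by positivity)]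
  push_cast
  rw [mul_mul_mul_comm, ← Real.exp_add, mul_mul_mul_comm, ← Real.exp_add,
      ← mul_inv, ← mul_inv, ← Real.sqrt_mul (by positivity), ← Real.sqrt_mul (by positivity)]
  congr 2
  · field_simp
  · field_simp; ring

lemma inner_integral (μ σ t : ℝ) (hσ : 0 < σ) :
    ∫ x, gaussianPDFReal 0 1 (t + x) * gaussianPDFReal μ (σ^2).toNNReal x
      = gaussianPDFReal (-μ) (1 + σ^2).toNNReal t := by
  have hτ : ((σ^2/(1+σ^2)).toNNReal) ≠ 0 := by
    simp only [ne_eq, Real.toNNReal_eq_zero, not_le]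
    positivity
  simp_rw [fun x => key_identity μ σ t x hσ]
  rw [integral_const_mul, integral_gaussianPDFReal_eq_one _ hτ, mul_one]

lemma integrable_prod_gauss (μ σ : ℝ) :
    Integrable (fun p : ℝ × ℝ => gaussianPDFReal 0 1 (p.2 + p.1) * gaussianPDFReal μ (σ^2).toNNReal p.1)
      ((volume : Measure ℝ).prod volume) := by
  have H : Integrable (fun p : ℝ × ℝ => gaussianPDFReal 0 1 p.1 * gaussianPDFReal μ (σ^2).toNNReal p.2)
      ((volume : Measure ℝ).prod volume) :=
    (integrable_gaussianPDFReal 0 1).mul_prod (integrable_gaussianPDFReal μ _)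
  have hmp : MeasurePreserving (fun p : ℝ × ℝ => (p.2 + p.1, p.1))
      ((volume : Measure ℝ).prod volume) ((volume : Measure ℝ).prod volume) :=
    Measure.measurePreserving_swap.comp (measurePreserving_prod_add_right _ _)
  exact (hmp.integrable_comp H.aestronglyMeasurable).mpr H

/-- For `ξ` normal with mean `μ` and variance `σ² > 0`,
`E[N(ξ)] = N(μ / √(1 + σ²))`. -/
theorem gaussian_expectation_cdf (μ σ : ℝ) (hσ : 0 < σ) :
    ∫ x, stdNormalCDF x ∂(gaussianReal μ (Real.toNNReal (σ ^ 2)))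
      = stdNormalCDF (μ / Real.sqrt (1 + σ ^ 2)) := by
  have h1 : (0:ℝ) ≤ σ^2 := sq_nonneg σ
  have hs : (0:ℝ) < 1 + σ^2 := by positivity
  have hv : (σ^2).toNNReal ≠ 0 := by
    simp only [ne_eq, Real.toNNReal_eq_zero, not_le]; positivity
  have hV : (1 + σ^2).toNNReal ≠ 0 := by
    simp only [ne_eq, Real.toNNReal_eq_zero, not_le]; positivity
  set c : ℝ := Real.sqrt (1 + σ^2) with hc_def
  have hc : 0 < c := Real.sqrt_pos.mpr hs
  -- Step 1: integral against gaussianReal as integral against volume with density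
  have step1 : ∫ x, stdNormalCDF x ∂(gaussianReal μ ((σ^2).toNNReal))
      = ∫ x, gaussianPDFReal μ ((σ^2).toNNReal) x * stdNormalCDF x := by
    rw [gaussianReal_of_var_ne_zero _ hv, gaussianPDF_def]
    have : (fun x => ENNReal.ofReal (gaussianPDFReal μ ((σ^2).toNNReal) x))
        = fun x => (((gaussianPDFReal μ ((σ^2).toNNReal) x).toNNReal : NNReal) : ℝ≥0∞) := rfl
    rw [this, integral_withDensity_eq_integral_smul
      (f := fun x => (gaussianPDFReal μ ((σ^2).toNNReal) x).toNNReal)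
      ((measurable_gaussianPDFReal _ _).real_toNNReal) stdNormalCDF]
    congr 1; ext x
    rw [NNReal.smul_def, smul_eq_mul, Real.coe_toNNReal _ (gaussianPDFReal_nonneg _ _ _)]
  rw [step1]
  -- Step 2: express stdNormalCDF as an integral and swap
  have step2 : ∫ x, gaussianPDFReal μ ((σ^2).toNNReal) x * stdNormalCDF x
      = ∫ t in Set.Iic (0:ℝ), ∫ x, gaussianPDFReal 0 1 (t + x) * gaussianPDFReal μ ((σ^2).toNNReal) x := by
    have : ∀ x, gaussianPDFReal μ ((σ^2).toNNReal) x * stdNormalCDF x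
        = ∫ t in Set.Iic (0:ℝ), gaussianPDFReal 0 1 (t + x) * gaussianPDFReal μ ((σ^2).toNNReal) x := by
      intro x
      rw [stdNormalCDF_shift x, mul_comm, ← integral_mul_const]
    simp_rw [this]
    refine integral_integral_swap ?_
    have hint : Integrable
        (fun p : ℝ × ℝ => gaussianPDFReal 0 1 (p.2 + p.1) * gaussianPDFReal μ ((σ^2).toNNReal) p.1)
        ((volume : Measure ℝ).prod (volume.restrict (Set.Iic (0:ℝ)))) := by
      have := (integrable_prod_gauss μ σ).restrict (s := Set.univ ×ˢ Set.Iic (0:ℝ))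
      rwa [← Measure.prod_restrict, Measure.restrict_univ] at this
    exact hint
  rw [step2]
  -- Step 3: inner integral is a Gaussian pdf
  have step3 : ∫ t in Set.Iic (0:ℝ), ∫ x,
        gaussianPDFReal 0 1 (t + x) * gaussianPDFReal μ ((σ^2).toNNReal) x
      = ∫ t in Set.Iic (0:ℝ), gaussianPDFReal (-μ) ((1 + σ^2).toNNReal) t :=
    setIntegral_congr_fun measurableSet_Iic fun t _ => inner_integral μ σ t hσ
  rw [step3, ← gaussianReal_Iic_toReal (-μ) hV 0]
  -- Step 4: identify the Gaussian measure as a pushforward of the standard Gaussian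
  have hmap : gaussianReal (-μ) ((1 + σ^2).toNNReal)
      = (gaussianReal 0 1).map (fun x => c * x + (-μ)) := by
    have h1' : (gaussianReal 0 1).map (fun x => c * x)
        = gaussianReal 0 ((1 + σ^2).toNNReal) := by
      rw [gaussianReal_map_const_mul c]
      congr 1
      · ring
      · ext
        simp only [NNReal.coe_mul, NNReal.coe_mk, NNReal.coe_one, mul_one]
        rw [Real.coe_toNNReal _ hs.le, hc_def, Real.sq_sqrt hs.le]
    have h2' : (gaussianReal 0 ((1 + σ^2).toNNReal)).map (fun x => x + (-μ))
        = gaussianReal (-μ) ((1 + σ^2).toNNReal) := by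
      rw [gaussianReal_map_add_const (-μ), zero_add]
    rw [← h2', ← h1', Measure.map_map (by fun_prop) (by fun_prop)]
    rfl
  rw [hmap, Measure.map_apply (by fun_prop) measurableSet_Iic]
  have hpre : (fun x => c * x + (-μ)) ⁻¹' Set.Iic 0 = Set.Iic (μ / c) := by
    ext x
    simp only [Set.mem_preimage, Set.mem_Iic]
    rw [← sub_eq_add_neg, sub_nonpos, ← le_div_iff₀' hc]
  rw [hpre, gaussianReal_Iic_toReal 0 one_ne_zero, ← stdNormalCDF_eq]
end

section
/- Let X be a normal random variable with mean μ ∈ ℝ and variance v > 0. Then E[(e^X − 1)^+] = C(μ + v/2, v), where C is the normalized Black-Scholes function; equivalently, E[(e^X − 1)^+] = e^{μ + v/2} N( μ/√v + √v ) − N( μ/√v ). -/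
open MeasureTheory Real ProbabilityTheory

lemma stdGauss_Ioi (a : ℝ) :
    ∫ x in Set.Ioi (-a), gaussianPDFReal 0 1 x = stdNormalCDF a := by
  have heven : ∀ x : ℝ, gaussianPDFReal 0 1 (-x) = gaussianPDFReal 0 1 x := by
    intro x
    simp [gaussianPDFReal, neg_sq]
  calc ∫ x in Set.Ioi (-a), gaussianPDFReal 0 1 x
      = ∫ x in Set.Ioi (-a), gaussianPDFReal 0 1 (-x) := by
        exact setIntegral_congr_fun measurableSet_Ioi (fun x _ => (heven x).symm)
    _ = ∫ x in Set.Iic a, gaussianPDFReal 0 1 x := by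
        rw [integral_comp_neg_Ioi, neg_neg]
    _ = stdNormalCDF a := by
        unfold stdNormalCDF
        refine setIntegral_congr_fun measurableSet_Iic (fun x _ => ?_)
        simp [gaussianPDFReal]

lemma pdf_Ioi {v : ℝ} (hv : 0 < v) (m : ℝ) :
    ∫ x in Set.Ioi (0:ℝ), gaussianPDFReal m v.toNNReal x
      = stdNormalCDF (m / Real.sqrt v) := by
  have hvc : ((v.toNNReal : ℝ)) = v := Real.coe_toNNReal v hv.le
  have hv' : v.toNNReal ≠ 0 := by
    simp [Real.toNNReal_eq_zero, not_le, hv]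
  have hsv : (0:ℝ) < Real.sqrt v := Real.sqrt_pos.2 hv
  have hvv : Real.sqrt v * Real.sqrt v = v := Real.mul_self_sqrt hv.le
  -- express as measure
  have h1 : (gaussianReal m v.toNNReal) (Set.Ioi 0)
      = ENNReal.ofReal (∫ x in Set.Ioi (0:ℝ), gaussianPDFReal m v.toNNReal x) :=
    gaussianReal_apply_eq_integral m hv' _
  -- the measure as a map of the standard gaussian
  have hmul : Measure.map (fun x => Real.sqrt v * x) (gaussianReal 0 1)
      = gaussianReal 0 v.toNNReal := by
    rw [gaussianReal_map_const_mul]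
    rw [mul_zero, mul_one]
    congr 1
    ext
    simp only [NNReal.coe_mk]
    rw [Real.sq_sqrt hv.le, hvc]
  have hadd : Measure.map (fun x => x + m) (gaussianReal 0 v.toNNReal)
      = gaussianReal m v.toNNReal := by
    have := gaussianReal_map_add_const (μ := 0) (v := v.toNNReal) m
    simpa using this
  have hmap : Measure.map (fun x => Real.sqrt v * x + m) (gaussianReal 0 1)
      = gaussianReal m v.toNNReal := by
    rw [← hadd, ← hmul, Measure.map_map (by fun_prop) (by fun_prop)]
    rfl
  have hpre : (fun x => Real.sqrt v * x + m) ⁻¹' (Set.Ioi 0)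
      = Set.Ioi (-(m / Real.sqrt v)) := by
    ext x
    simp only [Set.mem_preimage, Set.mem_Ioi]
    rw [← neg_div, div_lt_iff₀ hsv, mul_comm x]
    constructor <;> intro h <;> linarith
  have h2 : (gaussianReal m v.toNNReal) (Set.Ioi 0)
      = (gaussianReal 0 1) (Set.Ioi (-(m / Real.sqrt v))) := by
    rw [← hmap, Measure.map_apply (by fun_prop) measurableSet_Ioi, hpre]
  have h3 : (gaussianReal 0 1) (Set.Ioi (-(m / Real.sqrt v)))
      = ENNReal.ofReal (stdNormalCDF (m / Real.sqrt v)) := by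
    rw [gaussianReal_apply_eq_integral 0 one_ne_zero, stdGauss_Ioi]
  have hnn : 0 ≤ ∫ x in Set.Ioi (0:ℝ), gaussianPDFReal m v.toNNReal x :=
    setIntegral_nonneg measurableSet_Ioi (fun x _ => gaussianPDFReal_nonneg _ _ _)
  have hnn2 : 0 ≤ stdNormalCDF (m / Real.sqrt v) := by
    rw [← stdGauss_Ioi]
    exact setIntegral_nonneg measurableSet_Ioi (fun x _ => gaussianPDFReal_nonneg _ _ _)
  have := h1.symm.trans (h2.trans h3)
  rwa [ENNReal.ofReal_eq_ofReal_iff hnn hnn2] at this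

lemma pdf_mul_exp {v : ℝ} (hv : 0 < v) (μ x : ℝ) :
    gaussianPDFReal μ v.toNNReal x * Real.exp x
      = Real.exp (μ + v / 2) * gaussianPDFReal (μ + v) v.toNNReal x := by
  have hvc : ((v.toNNReal : ℝ)) = v := Real.coe_toNNReal v hv.le
  unfold gaussianPDFReal
  rw [hvc]
  have hexp : Real.exp (-(x - μ)^2 / (2*v)) * Real.exp x
      = Real.exp (μ + v/2) * Real.exp (-(x - (μ + v))^2 / (2*v)) := by
    rw [← Real.exp_add, ← Real.exp_add]
    congr 1
    field_simp
    ring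
  rw [mul_assoc, hexp]
  ring

/-- For `X` normal with mean `μ` and variance `v > 0`,
`E[(e^X - 1)^+] = C(μ + v/2, v) = e^{μ+v/2} N(μ/√v + √v) - N(μ/√v)`. -/
theorem gaussian_call_price (μ v : ℝ) (hv : 0 < v) :
    (∫ x, max (Real.exp x - 1) 0 ∂(gaussianReal μ (Real.toNNReal v))
        = bsC (μ + v / 2) v)
    ∧
    (∫ x, max (Real.exp x - 1) 0 ∂(gaussianReal μ (Real.toNNReal v))
        = Real.exp (μ + v / 2) * stdNormalCDF (μ / Real.sqrt v + Real.sqrt v)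
          - stdNormalCDF (μ / Real.sqrt v)) := by
  have hvc : ((v.toNNReal : ℝ)) = v := Real.coe_toNNReal v hv.le
  have hv' : v.toNNReal ≠ 0 := by simp [Real.toNNReal_eq_zero, not_le, hv]
  have hsv : (0:ℝ) < Real.sqrt v := Real.sqrt_pos.2 hv
  have hvv : Real.sqrt v * Real.sqrt v = v := Real.mul_self_sqrt hv.le
  -- main computation
  have key : ∫ x, max (Real.exp x - 1) 0 ∂(gaussianReal μ (Real.toNNReal v))
      = Real.exp (μ + v / 2) * stdNormalCDF (μ / Real.sqrt v + Real.sqrt v)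
        - stdNormalCDF (μ / Real.sqrt v) := by
    have hmeas : Measurable (fun x => (gaussianPDFReal μ v.toNNReal x).toNNReal) :=
      (measurable_gaussianPDFReal _ _).real_toNNReal
    have hwd : gaussianReal μ v.toNNReal
        = volume.withDensity (fun x => ((gaussianPDFReal μ v.toNNReal x).toNNReal : ENNReal)) := by
      rw [gaussianReal_of_var_ne_zero μ hv']
      rfl
    rw [hwd, integral_withDensity_eq_integral_smul hmeas]
    have hint_eq : ∀ x : ℝ, (gaussianPDFReal μ v.toNNReal x).toNNReal • max (Real.exp x - 1) 0
        = Set.indicator (Set.Ioi 0) (fun x => gaussianPDFReal μ v.toNNReal x * Real.exp x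
            - gaussianPDFReal μ v.toNNReal x) x := by
      intro x
      rw [NNReal.smul_def, Real.coe_toNNReal _ (gaussianPDFReal_nonneg _ _ _), smul_eq_mul]
      rcases le_or_gt x 0 with h | h
      · rw [Set.indicator_of_notMem (by simpa using h)]
        rw [max_eq_right (by simpa using Real.exp_le_one_iff.2 h), mul_zero]
      · rw [Set.indicator_of_mem (by simpa using h)]
        rw [max_eq_left (by simp [Real.one_le_exp_iff, h.le]), mul_sub, mul_one]
    rw [integral_congr_ae (Filter.Eventually.of_forall hint_eq), integral_indicator measurableSet_Ioi]
    have hI1 : IntegrableOn (fun x => gaussianPDFReal μ v.toNNReal x * Real.exp x)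
        (Set.Ioi 0) volume := by
      apply Integrable.integrableOn
      have : (fun x => gaussianPDFReal μ v.toNNReal x * Real.exp x)
          = fun x => Real.exp (μ + v / 2) * gaussianPDFReal (μ + v) v.toNNReal x := by
        funext x; exact pdf_mul_exp hv μ x
      rw [this]
      exact (integrable_gaussianPDFReal _ _).const_mul _
    have hI2 : IntegrableOn (fun x => gaussianPDFReal μ v.toNNReal x) (Set.Ioi 0) volume :=
      (integrable_gaussianPDFReal _ _).integrableOn
    rw [integral_sub hI1 hI2]
    have e1 : ∫ x in Set.Ioi (0:ℝ), gaussianPDFReal μ v.toNNReal x * Real.exp x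
        = Real.exp (μ + v / 2) * stdNormalCDF ((μ + v) / Real.sqrt v) := by
      rw [setIntegral_congr_fun measurableSet_Ioi
        (fun x _ => pdf_mul_exp hv μ x), integral_const_mul, pdf_Ioi hv]
    rw [e1, pdf_Ioi hv]
    congr 2
    rw [add_div]
    have : v / Real.sqrt v = Real.sqrt v := by
      rw [div_eq_iff hsv.ne']; exact hvv.symm
    rw [this]
  refine ⟨?_, key⟩
  rw [key]
  unfold bsC
  have harg : (μ + v / 2) / Real.sqrt v + Real.sqrt v / 2
      = μ / Real.sqrt v + Real.sqrt v := by
    field_simp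
    nlinarith [hvv]
  rw [harg]
  congr 2
  ring
end

section
/- Let T > 0, Y₀ > 0, ρ ∈ (−1, 1), X₀ ∈ ℝ, and let B be a normal random variable with mean 0 and variance T. Then E[ C( X₀ + ρ Y₀ B − (ρ²/2) Y₀² T, (1 − ρ²) Y₀² T ) ] = C(X₀, Y₀² T), where C is the normalized Black-Scholes function. In particular this expectation is independent of ρ. -/
open MeasureTheory Real ProbabilityTheory

/-!
`C(x, w) = E[(e^U - 1)⁺]` for `U ∼ N(x - w/2, w)`: it is the Black–Scholes call price. Given `B`,
the integrand is therefore the call price for `U ∼ N(X₀ - Y₀²T/2 + ρY₀B, (1 - ρ²)Y₀²T)`.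
Averaging over `ρY₀B ∼ N(0, ρ²Y₀²T)` convolves this law with a Gaussian, which yields
`U ∼ N(X₀ - Y₀²T/2, Y₀²T)` and hence the price `C(X₀, Y₀²T)`.
-/

open scoped NNReal

lemma stdNormalCDF_eq_measureReal_Iic (z : ℝ) :
    stdNormalCDF z = (gaussianReal 0 1).real (Set.Iic z) := by
  rw [measureReal_def, gaussianReal_apply_eq_integral 0 one_ne_zero,
    ENNReal.toReal_ofReal (setIntegral_nonneg measurableSet_Iic
      fun _ _ ↦ gaussianPDFReal_nonneg 0 1 _)]
  simp [stdNormalCDF, gaussianPDFReal]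

lemma measureReal_gaussianReal_Ioi_zero (m : ℝ) {v : ℝ≥0} (hv : v ≠ 0) :
    (gaussianReal m v).real (Set.Ioi 0) = stdNormalCDF (m / √v) := by
  have hsv : 0 < √(v : ℝ) := Real.sqrt_pos.2 (by positivity)
  have hlaw : (gaussianReal 0 1).map (fun z ↦ √v * z - m) = gaussianReal (-m) v := by
    have : (fun z : ℝ ↦ √v * z - m) = (· - m) ∘ (√v * ·) := rfl
    rw [this, ← Measure.map_map (by fun_prop) (by fun_prop), gaussianReal_map_const_mul,
      gaussianReal_map_sub_const]
    congr 1
    · simp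
    · ext; simp
  calc (gaussianReal m v).real (Set.Ioi 0)
      = (gaussianReal (-m) v).real (Set.Iio 0) := by
        rw [← gaussianReal_map_neg, map_measureReal_apply (by fun_prop) measurableSet_Iio]
        simp
    _ = (gaussianReal (-m) v).real (Set.Iic 0) := by
        have := nullSingletonClass_gaussianReal (μ := -m) hv
        exact measureReal_congr Iio_ae_eq_Iic
    _ = stdNormalCDF (m / √v) := by
        rw [← hlaw, map_measureReal_apply (by fun_prop) measurableSet_Iic,
          stdNormalCDF_eq_measureReal_Iic]
        congr 1
        ext z
        simp [le_div_iff₀ hsv, mul_comm]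

lemma exp_mul_gaussianPDFReal (m : ℝ) (v : ℝ≥0) (u : ℝ) :
    exp u * gaussianPDFReal m v u = exp (m + v / 2) * gaussianPDFReal (m + v) v u := by
  rcases eq_or_ne v 0 with rfl | hv
  · simp
  have hv' : (v : ℝ) ≠ 0 := by exact_mod_cast hv
  have hexp : u + -(u - m) ^ 2 / (2 * v) = m + v / 2 + -(u - (m + v)) ^ 2 / (2 * v) := by
    field_simp; ring
  simp only [gaussianPDFReal]
  rw [mul_left_comm, ← exp_add, hexp, exp_add]
  ring

lemma setIntegral_exp_gaussianReal (m : ℝ) {v : ℝ≥0} (hv : v ≠ 0) {s : Set ℝ}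
    (hs : MeasurableSet s) :
    ∫ u in s, exp u ∂gaussianReal m v = exp (m + v / 2) * (gaussianReal (m + v) v).real s := by
  rw [← integral_indicator hs, integral_gaussianReal_eq_integral_smul hv, measureReal_def,
    gaussianReal_apply_eq_integral _ hv, ENNReal.toReal_ofReal (setIntegral_nonneg hs
      fun _ _ ↦ gaussianPDFReal_nonneg _ _ _), ← integral_const_mul, ← integral_indicator hs]
  congr 1 with u
  by_cases hu : u ∈ s
  · simp [hu, mul_comm (gaussianPDFReal m v u), exp_mul_gaussianPDFReal]
  · simp [hu]

lemma integrable_exp_gaussianReal (m : ℝ) (v : ℝ≥0) : Integrable exp (gaussianReal m v) := by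
  simpa using integrable_exp_mul_gaussianReal (μ := m) (v := v) 1

lemma integrable_callPayoff_gaussianReal (m : ℝ) (v : ℝ≥0) :
    Integrable (fun u ↦ max (exp u - 1) 0) (gaussianReal m v) := by
  refine ((integrable_exp_gaussianReal m v).add (integrable_const 1)).mono'
    (by fun_prop) (ae_of_all _ fun u ↦ ?_)
  rw [Real.norm_eq_abs, abs_of_nonneg (le_max_right _ _)]
  simp only [Pi.add_apply]
  have := exp_pos u
  exact max_le (by linarith) (by linarith)

lemma max_exp_sub_one_zero_eq_indicator (u : ℝ) :
    max (exp u - 1) 0 = (Set.Ioi 0).indicator (fun u ↦ exp u - 1) u := by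
  by_cases hu : 0 < u
  · simp [hu, (one_lt_exp_iff.2 hu).le]
  · simp [hu, exp_le_one_iff.2 (not_lt.1 hu)]

theorem bsC_eq_integral_gaussianReal (x : ℝ) {w : ℝ} (hw : 0 < w) :
    bsC x w = ∫ u, max (exp u - 1) 0 ∂gaussianReal (x - w / 2) w.toNNReal := by
  have hw' : w.toNNReal ≠ 0 := by simpa using hw
  have hsw : √w ≠ 0 := (Real.sqrt_pos.2 hw).ne'
  have hsq : √w ^ 2 = w := Real.sq_sqrt hw.le
  have hd₁ : (x - w / 2 + w) / √w = x / √w + √w / 2 := by field_simp; rw [hsq]; ring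
  have hd₂ : (x - w / 2) / √w = x / √w + √w / 2 - √w := by field_simp; rw [hsq]; ring
  simp_rw [max_exp_sub_one_zero_eq_indicator]
  rw [integral_indicator measurableSet_Ioi, integral_sub
      (integrable_exp_gaussianReal _ _).integrableOn (integrable_const 1),
    setIntegral_exp_gaussianReal _ hw' measurableSet_Ioi, setIntegral_const, smul_eq_mul, mul_one,
    measureReal_gaussianReal_Ioi_zero _ hw', measureReal_gaussianReal_Ioi_zero _ hw', bsC,
    Real.coe_toNNReal _ hw.le, hd₁, hd₂, sub_add_cancel]

theorem integral_integral_gaussianReal_add_mul {E : Type*} [NormedAddCommGroup E]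
    [NormedSpace ℝ E] {f : ℝ → E} (a c : ℝ) (t v : ℝ≥0) (hf_meas : StronglyMeasurable f)
    (hf : Integrable f (gaussianReal a (.mk (c ^ 2) (sq_nonneg c) * t + v))) :
    ∫ b, ∫ u, f u ∂gaussianReal (a + c * b) v ∂gaussianReal 0 t
      = ∫ u, f u ∂gaussianReal a (.mk (c ^ 2) (sq_nonneg c) * t + v) := by
  have hshift : ∀ y, ∫ u, f u ∂gaussianReal (a + y) v = ∫ u, f (y + u) ∂gaussianReal a v :=
    fun y ↦ by
      rw [← gaussianReal_map_const_add]
      exact (measurableEmbedding_addLeft y).integral_map f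
  have hmeas : StronglyMeasurable fun y ↦ ∫ u, f (y + u) ∂gaussianReal a v :=
    (hf_meas.comp_measurable measurable_add).integral_prod_right'
  calc ∫ b, ∫ u, f u ∂gaussianReal (a + c * b) v ∂gaussianReal 0 t
      = ∫ b, ∫ u, f (c * b + u) ∂gaussianReal a v ∂gaussianReal 0 t := by simp_rw [hshift]
    _ = ∫ y, ∫ u, f (y + u) ∂gaussianReal a v
          ∂gaussianReal 0 (.mk (c ^ 2) (sq_nonneg c) * t) := by
        have hlaw := gaussianReal_map_const_mul (μ := 0) (v := t) c
        rw [mul_zero] at hlaw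
        rw [← hlaw, integral_map (by fun_prop) hmeas.aestronglyMeasurable]
    _ = ∫ u, f u ∂gaussianReal a (.mk (c ^ 2) (sq_nonneg c) * t + v) := by
        rw [← integral_conv, gaussianReal_conv_gaussianReal, zero_add]
        rwa [gaussianReal_conv_gaussianReal, zero_add]

/-- Zeroth order term of the small vol-of-vol expansion: for `B ~ N(0, T)`,
`E[C(X₀ + ρY₀B - (ρ²/2)Y₀²T, (1-ρ²)Y₀²T)] = C(X₀, Y₀²T)`; in particular the
expectation is independent of `ρ`. -/
theorem zeroth_order_expansion (T Y₀ ρ X₀ : ℝ) (hT : 0 < T) (hY₀ : 0 < Y₀)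
    (hρ : ρ ∈ Set.Ioo (-1 : ℝ) 1) :
    ∫ b, bsC (X₀ + ρ * Y₀ * b - ρ ^ 2 / 2 * Y₀ ^ 2 * T) ((1 - ρ ^ 2) * Y₀ ^ 2 * T)
        ∂(gaussianReal 0 (Real.toNNReal T))
      = bsC X₀ (Y₀ ^ 2 * T) := by
  obtain ⟨hρ₁, hρ₂⟩ := hρ
  set w := (1 - ρ ^ 2) * Y₀ ^ 2 * T
  have hw : 0 < w := mul_pos (mul_pos (by nlinarith) (by positivity)) hT
  calc _ = ∫ b, ∫ u, max (exp u - 1) 0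
          ∂gaussianReal (X₀ - Y₀ ^ 2 * T / 2 + ρ * Y₀ * b) w.toNNReal
          ∂gaussianReal 0 T.toNNReal := by
        congr 1 with b
        rw [bsC_eq_integral_gaussianReal _ hw]
        congr 2
        ring
    _ = ∫ u, max (exp u - 1) 0 ∂gaussianReal (X₀ - Y₀ ^ 2 * T / 2)
          (.mk ((ρ * Y₀) ^ 2) (sq_nonneg _) * T.toNNReal + w.toNNReal) :=
        integral_integral_gaussianReal_add_mul _ _ _ _ (by fun_prop)
          (integrable_callPayoff_gaussianReal _ _)
    _ = bsC X₀ (Y₀ ^ 2 * T) := by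
        rw [bsC_eq_integral_gaussianReal _ (by positivity)]
        congr 2
        ext
        rw [NNReal.coe_add, NNReal.coe_mul, NNReal.coe_mk, Real.coe_toNNReal _ hT.le,
          Real.coe_toNNReal _ hw.le, Real.coe_toNNReal _ (by positivity)]
        ring
end
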